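/- In a triangulated category D, if H_1 → H_2 → ... → H_{n+1} is a sequence of morphisms between cohomological functors D^op → Ab, and X is a subcategory of D such that each morphism F_i : H_i → H_{i+1} vanishes on thick^1_D(X) = smd(add^Σ(X)), then the composite F_n ∘ ... ∘ F_1 vanishes on the n-th thickening thick^n_D(X) = smd((add^Σ(X))^{*n}). -/

import Mathlib

/-!
Write `α` vanishes on `P` when `α.app (op X) = 0` for all `X ∈ P`. Vanishing passes to
retracts by naturality, and on `P * Q` the composite `α ≫ β` vanishes as soon as `α` vanishes
on `P`, `β` vanishes on `Q` and the middle functor is cohomological. By induction on `n`, the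
composite of `n` ghost maps therefore vanishes on `(add^Σ X)^{*n}`, hence on its retracts.
-/

open CategoryTheory Limits Pretriangulated

namespace Paper

variable {D : Type*} [Category D] [HasZeroObject D] [HasShift D ℤ]
  [Preadditive D] [∀ n : ℤ, (CategoryTheory.shiftFunctor D n).Additive] [Pretriangulated D]

/-- `X` is a retract (direct summand) of `Y`. -/
def IsRetractOf (X Y : D) : Prop := ∃ (i : X ⟶ Y) (r : Y ⟶ X), i ≫ r = 𝟙 X

/-- The smallest strict full subcategory containing `P` that is closed under
finite direct sums and all shifts. -/
inductive addShift (P : D → Prop) : D → Prop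
  | of {X : D} (hX : P X) : addShift P X
  | iso {X Y : D} (e : X ≅ Y) (hX : addShift P X) : addShift P Y
  | shift {X : D} (n : ℤ) (hX : addShift P X) : addShift P (X⟦n⟧)
  | zero {X : D} (hX : IsZero X) : addShift P X
  | sum {X Y Z : D} (hX : addShift P X) (hY : addShift P Y)
      (b : BinaryBicone X Y) (hb : b.IsBilimit) (e : Z ≅ b.pt) : addShift P Z

/-- Closure of `P` under retracts (direct summands). -/
def smd (P : D → Prop) : D → Prop := fun X => ∃ Y, P Y ∧ IsRetractOf X Y

/-- `P * Q` : objects `L` occurring in a distinguished triangle `M → L → N → ΣM`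
with `M ∈ P` and `N ∈ Q`. -/
def star (P Q : D → Prop) : D → Prop := fun L =>
  ∃ (M N : D) (f : M ⟶ L) (g : L ⟶ N) (h : N ⟶ M⟦(1 : ℤ)⟧),
    P M ∧ Q N ∧ Triangle.mk f g h ∈ distTriang D

/-- `(add^Σ P)^{* n}`, with the convention that the `0`-th power consists of
the zero objects. -/
def starPow (P : D → Prop) : ℕ → D → Prop
  | 0 => fun X => IsZero X
  | n + 1 => star (starPow P n) (addShift P)

/-- The `n`-th thickening `thick^n(P) = smd ((add^Σ P)^{* n})`. -/
def thick (P : D → Prop) (n : ℕ) : D → Prop := smd (starPow P n)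

/-- The level of `M` with respect to `P` : the least `n` with `M ∈ thick^n(P)`. -/
noncomputable def level (P : D → Prop) (M : D) : ℕ∞ :=
  sInf {n : ℕ∞ | ∃ k : ℕ, n = (k : ℕ∞) ∧ thick P k M}

end Paper

namespace Paper

open Opposite

variable {D : Type*} [Category D] [HasZeroObject D] [HasShift D ℤ]
  [Preadditive D] [∀ n : ℤ, (CategoryTheory.shiftFunctor D n).Additive] [Pretriangulated D]

/-- A cohomological functor sends distinguished triangles to exact sequences. -/
def IsCohomological (H : Dᵒᵖ ⥤ AddCommGrpCat) : Prop :=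
  ∀ T ∈ distTriang D, Function.Exact ⇑(H.map T.mor₂.op) ⇑(H.map T.mor₁.op)

/-- The composite `F_n ∘ ⋯ ∘ F_1 : H_0 ⟶ H_n` of a sequence of natural
transformations. -/
def compNat (H : ℕ → (Dᵒᵖ ⥤ AddCommGrpCat)) (F : ∀ i, H i ⟶ H (i + 1)) : ∀ n, H 0 ⟶ H n
  | 0 => 𝟙 (H 0)
  | n + 1 => compNat H F n ≫ F n

section Vanishing

variable {D C : Type*} [Category D] [Category C] [HasZeroMorphisms C]

def VanishesOn {G G' : Dᵒᵖ ⥤ C} (α : G ⟶ G') (P : D → Prop) : Prop :=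
  ∀ X, P X → α.app (op X) = 0

variable {G G' : Dᵒᵖ ⥤ C} {α : G ⟶ G'} {P Q : D → Prop}

theorem VanishesOn.mono (h : VanishesOn α Q) (hPQ : ∀ X, P X → Q X) : VanishesOn α P :=
  fun X hX => h X (hPQ X hX)

theorem VanishesOn.smd (h : VanishesOn α P) : VanishesOn α (smd P) := by
  rintro X ⟨Y, hY, i, r, hir⟩
  calc α.app (op X) = G.map r.op ≫ G.map i.op ≫ α.app (op X) := by
        rw [← Category.assoc, ← G.map_comp, ← op_comp, hir, op_id, G.map_id, Category.id_comp]
    _ = G.map r.op ≫ α.app (op Y) ≫ G'.map i.op := by rw [α.naturality]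
    _ = 0 := by rw [h Y hY, zero_comp, comp_zero]

theorem vanishesOn_isZero [HasZeroMorphisms D] [G.PreservesZeroMorphisms] :
    VanishesOn α IsZero :=
  fun _ hX => (G.map_isZero hX.op).eq_of_src _ _

end Vanishing

open ZeroObject in
theorem thick_one_of_addShift {P : D → Prop} {X : D} (hX : addShift P X) : thick P 1 X :=
  ⟨X, ⟨0, X, 0, 𝟙 X, 0, isZero_zero D, hX, contractible_distinguished₁ X⟩,
    𝟙 X, 𝟙 X, Category.id_comp _⟩

/-- The ghost step: on `M → L → N → ΣM`, an element of `G(L)` killed by `α` on `M` lifts, by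
exactness of `G'`, to `G'(N)`, where `β` kills it. -/
theorem VanishesOn.comp_star {G G' G'' : Dᵒᵖ ⥤ AddCommGrpCat} {α : G ⟶ G'} {β : G' ⟶ G''}
    {P Q : D → Prop} (hG' : IsCohomological G') (hα : VanishesOn α P) (hβ : VanishesOn β Q) :
    VanishesOn (α ≫ β) (star P Q) := by
  rintro L ⟨M, N, f, g, h, hM, hN, hT⟩
  ext x
  have hfx : G'.map f.op (α.app (op L) x) = 0 := by
    rw [← ConcreteCategory.comp_apply, ← α.naturality, hα M hM, comp_zero]
    rfl
  obtain ⟨z, hz⟩ := (hG' _ hT _).mp hfx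
  have hβg : G'.map g.op ≫ β.app (op L) = 0 := by rw [β.naturality, hβ N hN, zero_comp]
  change β.app (op L) (α.app (op L) x) = 0
  rw [← hz]
  exact ConcreteCategory.congr_hom hβg z

theorem vanishesOn_compNat_starPow (H : ℕ → (Dᵒᵖ ⥤ AddCommGrpCat)) (F : ∀ i, H i ⟶ H (i + 1))
    (hcoh : ∀ i, IsCohomological (H i)) (hadd : (H 0).Additive) {P : D → Prop}
    (hvan : ∀ i, VanishesOn (F i) (addShift P)) :
    ∀ n, VanishesOn (compNat H F n) (starPow P n)
  | 0 => vanishesOn_isZero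
  | n + 1 => (vanishesOn_compNat_starPow H F hcoh hadd hvan n).comp_star (hcoh n) (hvan n)

/-- **The Ghost Lemma.** If each `F i` vanishes on `thick¹(Xs)`, then the composite
of `n` of them vanishes on `thickⁿ(Xs)`. -/
theorem ghost_lemma (n : ℕ) (H : ℕ → (Dᵒᵖ ⥤ AddCommGrpCat)) (F : ∀ i, H i ⟶ H (i + 1))
    (hcoh : ∀ i, IsCohomological (H i)) (hadd : ∀ i, (H i).Additive)
    (Xs : D → Prop)
    (hvan : ∀ i, ∀ M : D, thick Xs 1 M → (F i).app (op M) = 0) :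
    ∀ M : D, thick Xs n M → (compNat H F n).app (op M) = 0 :=
  (vanishesOn_compNat_starPow H F hcoh (hadd 0)
    (fun i => VanishesOn.mono (hvan i) fun _ => thick_one_of_addShift) n).smd

end Paper
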